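/- arXiv:1805.05375 — 4 statements merged into one kernel-verified Lean document; each statement's English description precedes it below -/
import Mathlib

section
/- Let m ≥ 1 and let q = (q_1, ..., q_m) be a probability distribution sorted in non-increasing order such that q_j ≤ 2/m for all j = k*+1, ..., m, where 0 ≤ k* < m. Let A = 1 − Σ_{j=1}^{k*} q_j and let q̃ = (q_1, ..., q_{k*}, A/(m−k*), ..., A/(m−k*)) be the probability distribution whose last m−k* components all equal A/(m−k*). Then H(q) ≥ H(q̃) − 2/(e·ln 2), where H denotes the Shannon entropy in bits. -/
/-- Shannon entropy in bits of a finite vector. -/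
noncomputable def shannonH {m : ℕ} (w : Fin m → ℝ) : ℝ :=
  -∑ j, w j * Real.logb 2 (w j)

/-!
Only the tail `j ≥ k*` changes. There every `q j ≤ 2/m`, so
`∑_tail q j log q j ≤ A log (2/m)`, while the flattened tail contributes `A log (A/(m-k*))`.
The difference is `A log (c/A)` with `c = 2(m-k*)/m ≤ 2`, and `x log (c/x) ≤ c/e` for `x ≥ 0`.
-/

open Real Finset

theorem mul_log_div_le_div_exp_one {x c : ℝ} (hx : 0 ≤ x) (hc : 0 ≤ c) :
    x * log (c / x) ≤ c / exp 1 := by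
  rcases hx.eq_or_lt with rfl | hx
  · simp only [zero_mul]; positivity
  rcases hc.eq_or_lt with rfl | hc
  · simp
  have h := log_le_sub_one_of_pos (show 0 < c / x / exp 1 by positivity)
  rw [log_div (by positivity) (exp_pos 1).ne', log_exp] at h
  calc x * log (c / x) ≤ x * (c / x / exp 1) := by gcongr; linarith
    _ = c / exp 1 := by field_simp

theorem mul_log_le_mul_log_of_le {x b : ℝ} (hx : 0 ≤ x) (hxb : x ≤ b) :
    x * log x ≤ x * log b := by
  rcases hx.eq_or_lt with rfl | hx
  · simp
  · exact mul_le_mul_of_nonneg_left (log_le_log hx hxb) hx.le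

theorem sum_mul_log_le_sum_mul_log_mean_add {ι : Type*} (s : Finset ι) (p : ι → ℝ) {b : ℝ}
    (hp : ∀ j ∈ s, 0 ≤ p j) (hpb : ∀ j ∈ s, p j ≤ b) :
    ∑ j ∈ s, p j * log (p j) ≤
      ∑ _j ∈ s, (∑ i ∈ s, p i) / #s * log ((∑ i ∈ s, p i) / #s) + #s * b / exp 1 := by
  set A := ∑ j ∈ s, p j
  have hA : 0 ≤ A := sum_nonneg hp
  have hAb : A ≤ #s * b := by simpa using sum_le_card_nsmul s p b hpb
  have hconst : ∑ _j ∈ s, A / #s * log (A / #s) = A * log (A / #s) := by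
    rcases s.eq_empty_or_nonempty with rfl | hs
    · simp [A]
    · rw [sum_const, nsmul_eq_mul]; field_simp
  have hbound : A * log b ≤ A * log (A / #s) + #s * b / exp 1 := by
    rcases hA.eq_or_lt with hA0 | hApos
    · rw [← hA0, zero_mul, zero_mul, zero_add]
      exact div_nonneg (hA0 ▸ hAb) (exp_pos 1).le
    have hsb : 0 < #s * b := hApos.trans_le hAb
    have hs : (0 : ℝ) < #s := (Nat.cast_nonneg _).lt_of_ne (by rintro h; simp [← h] at hsb)
    calc A * log b = A * log (A / #s) + A * log (#s * b / A) := by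
          rw [← mul_add, ← log_mul (by positivity) (by positivity)]; congr 2; field_simp
      _ ≤ A * log (A / #s) + #s * b / exp 1 := by
          gcongr; exact mul_log_div_le_div_exp_one hA hsb.le
  calc ∑ j ∈ s, p j * log (p j) ≤ A * log b := by
        rw [sum_mul]; exact sum_le_sum fun j hj => mul_log_le_mul_log_of_le (hp j hj) (hpb j hj)
    _ ≤ _ := by rw [hconst]; exact hbound

theorem sum_sub_sum_eq_sum_filter_not_sub {ι M : Type*} [Fintype ι] [AddCommGroup M]
    (p : ι → Prop) [DecidablePred p] {f g : ι → M} (h : ∀ j, p j → f j = g j) :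
    ∑ j, f j - ∑ j, g j =
      ∑ j ∈ univ.filter (¬ p ·), f j - ∑ j ∈ univ.filter (¬ p ·), g j := by
  have hhead : ∑ j ∈ univ.filter p, f j = ∑ j ∈ univ.filter p, g j :=
    sum_congr rfl fun j hj => h j (mem_filter.1 hj).2
  rw [← sum_filter_add_sum_filter_not univ p f, ← sum_filter_add_sum_filter_not univ p g,
    hhead, add_sub_add_left_eq_sub]

theorem Fin.card_filter_not_val_lt {n : ℕ} (k : ℕ) :
    #{i : Fin n | ¬ (i : ℕ) < k} = n - k := by
  have h := card_filter_add_card_filter_not (s := univ) fun i : Fin n => (i : ℕ) < k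
  rw [Fin.card_filter_val_lt, card_univ, Fintype.card_fin] at h
  omega

theorem shannonH_eq_neg_sum_mul_log_div {m : ℕ} (w : Fin m → ℝ) :
    shannonH w = -(∑ j, w j * log (w j)) / log 2 := by
  simp only [shannonH, logb, ← mul_div_assoc, sum_div, neg_div]

theorem greedy_entropy_q_vs_qtilde_general
    (m : ℕ) (q : Fin m → ℝ)
    (hqnn : ∀ j, 0 ≤ q j) (hqsum : ∑ j, q j = 1)
    (kstar : ℕ) (hk : kstar < m)
    (hsmall : ∀ j : Fin m, kstar ≤ j.val → q j ≤ 2 / (m : ℝ))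
    (A : ℝ)
    (hA : A = 1 - ∑ j ∈ Finset.univ.filter (fun j : Fin m => j.val < kstar), q j)
    (qt : Fin m → ℝ)
    (hqt : ∀ j : Fin m,
      qt j = if j.val < kstar then q j else A / ((m : ℝ) - (kstar : ℝ))) :
    shannonH q ≥ shannonH qt - 2 / (Real.exp 1 * Real.log 2) := by
  set T := univ.filter fun j : Fin m => ¬ j.val < kstar
  have hcard : (#T : ℝ) = m - kstar := by
    rw [Fin.card_filter_not_val_lt, Nat.cast_sub hk.le]
  have hAT : A = ∑ j ∈ T, q j := by
    rw [hA, ← hqsum, ← sum_filter_add_sum_filter_not univ fun j : Fin m => j.val < kstar]; ring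
  have hsplit := sum_sub_sum_eq_sum_filter_not_sub (fun j : Fin m => j.val < kstar)
    (f := fun j => q j * log (q j)) (g := fun j => qt j * log (qt j))
    fun j hj => by rw [hqt, if_pos hj]
  have htail : ∑ j ∈ T, qt j * log (qt j) = ∑ _j ∈ T, A / #T * log (A / #T) :=
    sum_congr rfl fun j hj => by rw [hqt, if_neg (mem_filter.1 hj).2, hcard]
  have hflat := sum_mul_log_le_sum_mul_log_mean_add T q (fun j _ => hqnn j)
    fun j hj => hsmall j (not_lt.1 (mem_filter.1 hj).2)
  have hm : (0 : ℝ) < m := Nat.cast_pos.2 (Nat.zero_lt_of_lt hk)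
  have hgap : ∑ j, q j * log (q j) - ∑ j, qt j * log (qt j) ≤ 2 / exp 1 := by
    rw [hsplit, htail, hAT]
    calc _ ≤ #T * (2 / m) / exp 1 := by linarith
      _ ≤ m * (2 / m) / exp 1 := by
        gcongr; exact (card_le_univ T).trans_eq (Fintype.card_fin m)
      _ = 2 / exp 1 := by field_simp
  rw [ge_iff_le, shannonH_eq_neg_sum_mul_log_div, shannonH_eq_neg_sum_mul_log_div, ← div_div,
    ← sub_div, div_le_div_iff_of_pos_right (log_pos one_lt_two)]
  linarith

/-- For a sorted probability distribution `q` whose components beyond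
`k*` are at most `2/m`, flattening the tail into equal components `A/(m-k*)` can
increase the entropy by at most `2/(e ln 2)`. -/
theorem greedy_entropy_q_vs_qtilde
    (m : ℕ) (hm : 1 ≤ m) (q : Fin m → ℝ)
    (hqnn : ∀ j, 0 ≤ q j) (hqsum : ∑ j, q j = 1) (hqsort : Antitone q)
    (kstar : ℕ) (hk : kstar < m)
    (hsmall : ∀ j : Fin m, kstar ≤ j.val → q j ≤ 2 / (m : ℝ))
    (A : ℝ)
    (hA : A = 1 - ∑ j ∈ Finset.univ.filter (fun j : Fin m => j.val < kstar), q j)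
    (qt : Fin m → ℝ)
    (hqt : ∀ j : Fin m,
      qt j = if j.val < kstar then q j else A / ((m : ℝ) - (kstar : ℝ))) :
    shannonH q ≥ shannonH qt - 2 / (Real.exp 1 * Real.log 2) :=
  greedy_entropy_q_vs_qtilde_general m q hqnn hqsum kstar hk hsmall A hA qt hqt
end

section
/- Let p = (p_1, ..., p_n) be a probability distribution with all components strictly positive, let 1 ≤ m < n, and let 0 ≤ k* < m. Suppose q_1 ≥ q_2 ≥ ... ≥ q_{k*} are exactly the k* largest components of p and each q_j > 2/m for j ≤ k*. Let A = 1 − Σ_{j=1}^{k*} q_j and let q̃ = (q_1, ..., q_{k*}, A/(m−k*), ..., A/(m−k*)), assumed sorted in non-increasing order. Let q* = (q*_1, ..., q*_m), sorted in non-increasing order, be any aggregation of p into m parts. Then q̃ is majorized by q*, and consequently H(q̃) ≥ H(q*), where H denotes Shannon entropy in bits. -/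
open Finset Real

/-- The paper's `Σ_{k=1}^i w_k`, with indices starting at `0`. -/
def prefixSum {m : ℕ} (w : Fin m → ℝ) (i : ℕ) : ℝ :=
  ∑ k ∈ univ.filter (fun k : Fin m => k.val < i), w k

noncomputable def extendByZero {m : ℕ} (w : Fin m → ℝ) (j : ℕ) : ℝ :=
  if h : j < m then w ⟨j, h⟩ else 0

section

variable {m : ℕ}

@[simp]
lemma extendByZero_val (w : Fin m → ℝ) (k : Fin m) : extendByZero w k = w k := by
  simp [extendByZero]

lemma extendByZero_of_le (w : Fin m → ℝ) {j : ℕ} (hj : m ≤ j) : extendByZero w j = 0 := by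
  simp [extendByZero, hj.not_gt]

lemma extendByZero_nonneg {w : Fin m → ℝ} (hw0 : 0 ≤ w) : 0 ≤ extendByZero w := fun j => by
  unfold extendByZero
  split
  exacts [hw0 _, le_rfl]

lemma antitone_extendByZero {w : Fin m → ℝ} (hw : Antitone w) (hw0 : 0 ≤ w) :
    Antitone (extendByZero w) := by
  intro x y hxy
  by_cases hy : y < m
  · simp only [extendByZero, hy, hxy.trans_lt hy, dite_true]
    exact hw (Fin.mk_le_mk.mpr hxy)
  · rw [extendByZero_of_le w (not_lt.mp hy)]
    exact extendByZero_nonneg hw0 x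

lemma sum_range_extendByZero (w : Fin m → ℝ) :
    ∑ j ∈ range m, extendByZero w j = ∑ k, w k := by
  rw [← Fin.sum_univ_eq_sum_range]
  simp

lemma prefixSum_eq_sum_range (w : Fin m → ℝ) (i : ℕ) :
    prefixSum w i = ∑ j ∈ range i, extendByZero w j := by
  rw [← sum_filter_of_ne (p := (· < m)) fun j _ h => by
    by_contra hj
    exact h (extendByZero_of_le w (not_lt.mp hj))]
  have hset : (range i).filter (· < m) =
      (univ.filter fun k : Fin m => k.val < i).map Fin.valEmbedding := by
    ext j
    simp only [mem_filter, mem_range, mem_map, mem_univ, true_and, Fin.valEmbedding_apply]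
    exact ⟨fun h => ⟨⟨j, h.2⟩, h.1, rfl⟩, fun ⟨k, hk, hkj⟩ => hkj ▸ ⟨hk, k.isLt⟩⟩
  rw [hset, sum_map]
  simp [prefixSum]

lemma prefixSum_min (w : Fin m → ℝ) (i : ℕ) : prefixSum w (min i m) = prefixSum w i := by
  simp [prefixSum]

lemma prefixSum_lt_sum {w : Fin m → ℝ} (hw : ∀ k, 0 < w k) {i : ℕ} (him : i < m) :
    prefixSum w i < ∑ k, w k :=
  sum_lt_sum_of_subset (filter_subset _ _) (mem_univ ⟨i, him⟩) (by simp) (hw _)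
    fun k _ _ => (hw k).le

lemma Antitone.sum_le_prefixSum_of_card_le {w : Fin m → ℝ} (hw : Antitone w) (hw0 : 0 ≤ w)
    {S : Finset (Fin m)} {i : ℕ} (hS : #S ≤ i) : ∑ k ∈ S, w k ≤ prefixSum w i := by
  set I := univ.filter fun k : Fin m => k.val < i
  -- Exchange argument: the entries of `S \ I` are `≤ t`, those of `I \ S` are `≥ t`,
  -- and `I \ S` has at least as many elements.
  set t := extendByZero w i
  have hcard : #(S \ I) ≤ #(I \ S) := by
    have hI : #I = min m i := Fin.card_filter_val_lt
    have hSI := card_sdiff_add_card_inter S I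
    have hIS := card_sdiff_add_card_inter I S
    have hSm := card_le_univ S
    rw [inter_comm] at hIS
    rw [Fintype.card_fin] at hSm
    omega
  have hout : ∀ k ∈ S \ I, w k ≤ t := fun k hk => by
    rw [← extendByZero_val w]
    exact antitone_extendByZero hw hw0 (by simpa [I] using (mem_sdiff.mp hk).2)
  have hin : ∀ k ∈ I \ S, t ≤ w k := fun k hk => by
    rw [← extendByZero_val w]
    exact antitone_extendByZero hw hw0 (by simpa [I] using (mem_filter.mp (mem_sdiff.mp hk).1).2.le)
  calc ∑ k ∈ S, w k = ∑ k ∈ S ∩ I, w k + ∑ k ∈ S \ I, w k :=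
        (sum_inter_add_sum_sdiff S I w).symm
    _ ≤ ∑ k ∈ S ∩ I, w k + #(S \ I) • t := by gcongr; exact sum_le_card_nsmul _ _ _ hout
    _ ≤ ∑ k ∈ S ∩ I, w k + #(I \ S) • t := by gcongr; exact extendByZero_nonneg hw0 i
    _ ≤ ∑ k ∈ I ∩ S, w k + ∑ k ∈ I \ S, w k := by
      rw [inter_comm]
      gcongr
      exact card_nsmul_le_sum _ _ _ hin
    _ = prefixSum w i := sum_inter_add_sum_sdiff I S w

end

lemma Antitone.mul_sum_range_le {f : ℕ → ℝ} (hf : Antitone f) {i n : ℕ} (hin : i ≤ n) :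
    (i : ℝ) * ∑ j ∈ range n, f j ≤ n * ∑ j ∈ range i, f j := by
  have htail : ∑ j ∈ Ico i n, f j ≤ (n - i : ℕ) * f i := by
    simpa using sum_le_card_nsmul (Ico i n) f (f i) fun j hj => hf (mem_Ico.mp hj).1
  have hhead : (i : ℝ) * f i ≤ ∑ j ∈ range i, f j := by
    simpa using card_nsmul_le_sum (range i) f (f i) fun j hj => hf (mem_range.mp hj).le
  push_cast [hin] at htail
  have hni : (0 : ℝ) ≤ n - i := sub_nonneg.mpr (by exact_mod_cast hin)
  rw [← sum_range_add_sum_Ico f hin]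
  nlinarith [mul_le_mul_of_nonneg_left htail i.cast_nonneg, mul_le_mul_of_nonneg_left hhead hni]

lemma sum_range_le_of_flat_tail {a Q : ℕ → ℝ} (hQ : Antitone Q) {k m : ℕ} (hkm : k ≤ m)
    (hhead : ∀ i ≤ k, ∑ j ∈ range i, a j ≤ ∑ j ∈ range i, Q j)
    (htail : ∀ j, k ≤ j → j < m →
      a j = (∑ j ∈ range m, Q j - ∑ j ∈ range k, a j) / (m - k))
    {i : ℕ} (him : i ≤ m) : ∑ j ∈ range i, a j ≤ ∑ j ∈ range i, Q j := by
  rcases le_or_gt i k with hik | hki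
  · exact hhead i hik
  have havg :
      ((i - k : ℕ) : ℝ) * ∑ j ∈ Ico k m, Q j ≤ ((m - k : ℕ) : ℝ) * ∑ j ∈ Ico k i, Q j := by
    rw [sum_Ico_eq_sum_range, sum_Ico_eq_sum_range]
    exact Antitone.mul_sum_range_le (fun x y hxy => hQ (by omega)) (by omega)
  have ha : ∑ j ∈ range i, a j = ∑ j ∈ range k, a j +
      (i - k : ℕ) * ((∑ j ∈ range m, Q j - ∑ j ∈ range k, a j) / (m - k)) := by
    rw [← sum_range_add_sum_Ico a hki.le, sum_congr rfl fun j hj =>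
      htail j (mem_Ico.mp hj).1 ((mem_Ico.mp hj).2.trans_le him)]
    simp
  have hs := hhead k le_rfl
  rw [ha, ← sum_range_add_sum_Ico Q hki.le, ← sum_range_add_sum_Ico Q hkm]
  push_cast [hki.le, hkm] at havg ⊢
  have hki' : (k : ℝ) < i := by exact_mod_cast hki
  have him' : (i : ℝ) ≤ m := by exact_mod_cast him
  rw [mul_div_assoc', add_div' _ _ _ (by linarith), div_le_iff₀ (by linarith)]
  nlinarith [mul_le_mul_of_nonneg_left hs (sub_nonneg.mpr him')]

lemma prefixSum_le_of_flat_tail {m k : ℕ} {a b : Fin m → ℝ} (hb : Antitone b) (hb0 : 0 ≤ b)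
    (hkm : k ≤ m) (hhead : ∀ i ≤ k, prefixSum a i ≤ prefixSum b i)
    (htail : ∀ j : Fin m, k ≤ j.val → a j = (∑ j, b j - prefixSum a k) / (m - k))
    (i : ℕ) : prefixSum a i ≤ prefixSum b i := by
  rw [← prefixSum_min, ← prefixSum_min b, prefixSum_eq_sum_range, prefixSum_eq_sum_range]
  refine sum_range_le_of_flat_tail (antitone_extendByZero hb hb0) hkm (fun i hi => ?_)
    (fun j hkj hjm => ?_) (min_le_right i m)
  · simpa only [prefixSum_eq_sum_range] using hhead i hi
  · rw [sum_range_extendByZero, ← prefixSum_eq_sum_range, ← htail ⟨j, hjm⟩ hkj]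
    simp [extendByZero, hjm]

lemma sum_eq_of_flat_tail {m k : ℕ} {a b : Fin m → ℝ} (hkm : k < m)
    (htail : ∀ j : Fin m, k ≤ j.val → a j = (∑ j, b j - prefixSum a k) / (m - k)) :
    ∑ j, a j = ∑ j, b j := by
  have hd : ((m - k : ℕ) : ℝ) ≠ 0 := by simp; omega
  rw [← sum_range_extendByZero, ← sum_range_add_sum_Ico _ hkm.le, ← prefixSum_eq_sum_range,
    sum_congr rfl fun j hj => (by
      have hj := mem_Ico.mp hj
      simpa [extendByZero, hj.2] using htail ⟨j, hj.2⟩ hj.1), sum_const, Nat.card_Ico,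
    nsmul_eq_mul]
  push_cast [hkm.le] at hd ⊢
  field_simp
  ring

def IsAggregationBy {n m : ℕ} (f : Fin n → Fin m) (p : Fin n → ℝ) (q : Fin m → ℝ) :
    Prop :=
  ∀ j, q j = ∑ i ∈ univ.filter (fun i => f i = j), p i

namespace IsAggregationBy

variable {n m : ℕ} {f : Fin n → Fin m} {p : Fin n → ℝ} {q : Fin m → ℝ}

lemma sum_eq (hagg : IsAggregationBy f p q) : ∑ j, q j = ∑ i, p i := by
  rw [sum_congr rfl fun j _ => hagg j, sum_fiberwise_eq_sum_filter]
  simp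

lemma nonneg (hagg : IsAggregationBy f p q) (hp : 0 ≤ p) : 0 ≤ q :=
  fun j => (hagg j).symm ▸ sum_nonneg fun i _ => hp i

lemma sum_le_sum_image (hagg : IsAggregationBy f p q) (hp : 0 ≤ p) (S : Finset (Fin n)) :
    ∑ i ∈ S, p i ≤ ∑ j ∈ S.image f, q j := by
  rw [sum_congr rfl fun j _ => hagg j, sum_fiberwise_eq_sum_filter]
  exact sum_le_sum_of_subset_of_nonneg
    (fun i hi => mem_filter.mpr ⟨mem_univ i, mem_image_of_mem f hi⟩) fun i _ _ => hp i

lemma prefixSum_comp_perm_le (hagg : IsAggregationBy f p q) (hp : 0 ≤ p) (hq : Antitone q)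
    (σ : Equiv.Perm (Fin n)) (i : ℕ) : prefixSum (p ∘ σ) i ≤ prefixSum q i := by
  set S := (univ.filter fun k : Fin n => k.val < i).map σ.toEmbedding
  have hS : #(S.image f) ≤ i := by
    refine card_image_le.trans ?_
    simp [S, Fin.card_filter_val_lt]
  calc prefixSum (p ∘ σ) i = ∑ k ∈ S, p k := by simp [S, prefixSum]
    _ ≤ ∑ j ∈ S.image f, q j := hagg.sum_le_sum_image hp S
    _ ≤ prefixSum q i := hq.sum_le_prefixSum_of_card_le (hagg.nonneg hp) hS

end IsAggregationBy

lemma negMulLog_le_tangent {a b : ℝ} (ha : 0 < a) (hb : 0 ≤ b) :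
    negMulLog b ≤ negMulLog a + (-log a - 1) * (b - a) := by
  rcases hb.eq_or_lt with rfl | hb
  · simp only [negMulLog, neg_mul, zero_mul, neg_zero]
    linarith
  have h := mul_le_mul_of_nonneg_left (log_le_sub_one_of_pos (div_pos ha hb)) hb.le
  rw [log_div ha.ne' hb.ne', show b * (a / b - 1) = a - b by field_simp] at h
  simp only [negMulLog]
  linarith

lemma sum_range_mul_nonpos_of_monotoneOn {c d : ℕ → ℝ} {m : ℕ}
    (hc : MonotoneOn c (Set.Iio m))
    (hd : ∀ i ≤ m, 0 ≤ ∑ j ∈ range i, d j) (hdm : ∑ j ∈ range m, d j = 0) :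
    ∑ j ∈ range m, c j * d j ≤ 0 := by
  rw [show ∑ j ∈ range m, c j * d j = ∑ j ∈ range m, c j • d j from rfl,
    sum_range_by_parts, hdm, smul_zero, zero_sub, neg_nonpos]
  refine sum_nonneg fun i hi => smul_nonneg ?_ (hd _ (by grind))
  have hi := mem_range.mp hi
  exact sub_nonneg.mpr (hc (Set.mem_Iio.mpr (by omega)) (Set.mem_Iio.mpr (by omega)) (by omega))

theorem sum_negMulLog_le_of_prefixSum_le {m : ℕ} {a b : Fin m → ℝ} (ha : Antitone a)
    (ha0 : ∀ k, 0 < a k) (hb0 : 0 ≤ b) (hab : ∀ i, prefixSum a i ≤ prefixSum b i)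
    (hsum : ∑ k, a k = ∑ k, b k) :
    ∑ k, negMulLog (b k) ≤ ∑ k, negMulLog (a k) := by
  set c : ℕ → ℝ := fun j => -log (extendByZero a j) - 1
  set d : ℕ → ℝ := fun j => extendByZero b j - extendByZero a j
  have hcd : ∑ k, (-log (a k) - 1) * (b k - a k) = ∑ j ∈ range m, c j * d j := by
    rw [← Fin.sum_univ_eq_sum_range]
    simp [c, d]
  have hc : MonotoneOn c (Set.Iio m) := fun x hx y hy hxy => by
    simp only [c, show extendByZero a x = a ⟨x, hx⟩ from extendByZero_val a ⟨x, hx⟩,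
      show extendByZero a y = a ⟨y, hy⟩ from extendByZero_val a ⟨y, hy⟩]
    gcongr
    exacts [ha0 _, ha (Fin.mk_le_mk.mpr hxy)]
  have hd : ∀ i ≤ m, 0 ≤ ∑ j ∈ range i, d j := fun i _ => by
    simpa [d, ← prefixSum_eq_sum_range] using hab i
  have hdm : ∑ j ∈ range m, d j = 0 := by
    simp [d, sum_range_extendByZero, hsum]
  calc ∑ k, negMulLog (b k)
      ≤ ∑ k, (negMulLog (a k) + (-log (a k) - 1) * (b k - a k)) :=
        sum_le_sum fun k _ => negMulLog_le_tangent (ha0 k) (hb0 k)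
    _ ≤ ∑ k, negMulLog (a k) := by
        rw [sum_add_distrib, hcd]
        linarith [sum_range_mul_nonpos_of_monotoneOn hc hd hdm]

lemma shannonH_eq_sum_negMulLog {m : ℕ} (w : Fin m → ℝ) :
    shannonH w = (∑ k, negMulLog (w k)) / log 2 := by
  simp only [shannonH, negMulLog, logb, sum_div, ← sum_neg_distrib]
  congr! 1 with k
  ring

theorem shannonH_le_of_prefixSum_le {m : ℕ} {a b : Fin m → ℝ} (ha : Antitone a)
    (ha0 : ∀ k, 0 < a k) (hb0 : 0 ≤ b) (hab : ∀ i, prefixSum a i ≤ prefixSum b i)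
    (hsum : ∑ k, a k = ∑ k, b k) : shannonH b ≤ shannonH a := by
  rw [shannonH_eq_sum_negMulLog, shannonH_eq_sum_negMulLog]
  gcongr ?_ / _
  exact sum_negMulLog_le_of_prefixSum_le ha ha0 hb0 hab hsum

theorem qtilde_majorized_by_qstar_general
    (n m : ℕ) (hmn : m < n)
    (p : Fin n → ℝ) (hp : ∀ i, 0 < p i) (hpsum : ∑ i, p i = 1)
    (kstar : ℕ) (hk : kstar < m)
    (ps : Fin n → ℝ) (σ : Equiv.Perm (Fin n)) (hps : ps = p ∘ σ)
    (A : ℝ)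
    (hA : A = 1 - ∑ j ∈ Finset.univ.filter (fun j : Fin n => j.val < kstar), ps j)
    (qt : Fin m → ℝ)
    (hqt : ∀ j : Fin m, qt j =
      if h : j.val < kstar then ps ⟨j.val, lt_trans j.isLt hmn⟩
      else A / ((m : ℝ) - (kstar : ℝ)))
    (hqtsort : Antitone qt)
    (qstar : Fin m → ℝ) (hqstarsort : Antitone qstar)
    (f : Fin n → Fin m)
    (hagg : ∀ j : Fin m, qstar j = ∑ i ∈ Finset.univ.filter (fun i => f i = j), p i) :
    (∀ i : ℕ,
      ∑ k ∈ Finset.univ.filter (fun k : Fin m => k.val < i), qt k ≤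
      ∑ k ∈ Finset.univ.filter (fun k : Fin m => k.val < i), qstar k) ∧
    shannonH qt ≥ shannonH qstar := by
  subst hps
  have hagg : IsAggregationBy f p qstar := hagg
  have hp0 : 0 ≤ p := fun i => (hp i).le
  have hhead : ∀ i ≤ kstar, prefixSum qt i = prefixSum (p ∘ σ) i := fun i hi => by
    rw [prefixSum_eq_sum_range, prefixSum_eq_sum_range]
    refine sum_congr rfl fun j hj => ?_
    have hj : j < kstar := (mem_range.mp hj).trans_le hi
    simp [extendByZero, hqt, hj, hj.trans hk, hj.trans (hk.trans hmn)]
  have htail (j : Fin m) (hj : kstar ≤ j.val) :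
      qt j = (∑ j, qstar j - prefixSum qt kstar) / (m - kstar) := by
    rw [hqt, dif_neg hj.not_gt, hA, hagg.sum_eq, hpsum, hhead kstar le_rfl]
    rfl
  have hmaj : ∀ i, prefixSum qt i ≤ prefixSum qstar i :=
    prefixSum_le_of_flat_tail hqstarsort (hagg.nonneg hp0) hk.le
      (fun i hi => (hhead i hi).trans_le (hagg.prefixSum_comp_perm_le hp0 hqstarsort σ i)) htail
  have hA_pos : 0 < A := by
    have := prefixSum_lt_sum (fun i => hp (σ i)) (hk.trans hmn)
    rw [Equiv.sum_comp σ p, hpsum] at this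
    exact hA ▸ sub_pos.mpr this
  have hqt_pos (j : Fin m) : 0 < qt j := by
    rw [hqt]
    split
    exacts [hp _, div_pos hA_pos (sub_pos.mpr (by exact_mod_cast hk))]
  exact ⟨hmaj, shannonH_le_of_prefixSum_le hqtsort hqt_pos (hagg.nonneg hp0) hmaj
    (sum_eq_of_flat_tail hk htail)⟩

/-- The distribution `q̃` built from the `k*` largest components of `p`
(each exceeding `2/m`) followed by equal components `A/(m-k*)` is majorized by any
sorted `m`-part aggregation `q*` of `p`, hence has at least as much entropy. -/
theorem qtilde_majorized_by_qstar
    (n m : ℕ) (hm : 1 ≤ m) (hmn : m < n)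
    (p : Fin n → ℝ) (hp : ∀ i, 0 < p i) (hpsum : ∑ i, p i = 1)
    (kstar : ℕ) (hk : kstar < m)
    (ps : Fin n → ℝ) (σ : Equiv.Perm (Fin n)) (hps : ps = p ∘ σ)
    (hpssort : Antitone ps)
    (hbig : ∀ j : Fin n, j.val < kstar → 2 / (m : ℝ) < ps j)
    (A : ℝ)
    (hA : A = 1 - ∑ j ∈ Finset.univ.filter (fun j : Fin n => j.val < kstar), ps j)
    (qt : Fin m → ℝ)
    (hqt : ∀ j : Fin m, qt j =
      if h : j.val < kstar then ps ⟨j.val, lt_trans j.isLt hmn⟩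
      else A / ((m : ℝ) - (kstar : ℝ)))
    (hqtsort : Antitone qt)
    (qstar : Fin m → ℝ) (hqstarsort : Antitone qstar)
    (f : Fin n → Fin m) (hf : Function.Surjective f)
    (hagg : ∀ j : Fin m, qstar j = ∑ i ∈ Finset.univ.filter (fun i => f i = j), p i) :
    (∀ i : ℕ,
      ∑ k ∈ Finset.univ.filter (fun k : Fin m => k.val < i), qt k ≤
      ∑ k ∈ Finset.univ.filter (fun k : Fin m => k.val < i), qstar k) ∧
    shannonH qt ≥ shannonH qstar :=
  qtilde_majorized_by_qstar_general n m hmn p hp hpsum kstar hk ps σ hps A hA qt hqt hqtsort qstar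
    hqstarsort f hagg
end

section
/- Let q = (q_1, ..., q_m) be a probability distribution and let (q_[1], ..., q_[m]) be the rearrangement of its components in non-increasing order. Then (1/m)·Σ_{i=1}^{m} Σ_{j=1}^{m} |q_i − q_j| = 2 + 2/m − (4/m)·Σ_{i=1}^{m} i·q_[i]. -/
/-- The mean absolute pairwise difference of a probability distribution
equals `2 + 2/m - (4/m) ∑ i·q_[i]`, where `q_[·]` is the non-increasing
rearrangement (Massey's guessing entropy identity). -/
theorem pairwise_diff_guessing_entropy
    (m : ℕ) (q : Fin m → ℝ) (hnn : ∀ i, 0 ≤ q i) (hsum : ∑ i, q i = 1)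
    (qs : Fin m → ℝ) (σ : Equiv.Perm (Fin m)) (hqs : qs = q ∘ σ)
    (hsort : Antitone qs) :
    (1 / (m : ℝ)) * ∑ i, ∑ j, |q i - q j| =
      2 + 2 / (m : ℝ) - (4 / (m : ℝ)) * ∑ i : Fin m, ((i : ℕ) + 1 : ℝ) * qs i := by
  -- m ≠ 0
  have hm : m ≠ 0 := by
    rintro rfl
    simp at hsum
  have hmR : (m : ℝ) ≠ 0 := Nat.cast_ne_zero.mpr hm
  -- sum of qs = 1
  have hsum' : ∑ i, qs i = 1 := by
    rw [hqs]
    rw [show ∑ i, (q ∘ σ) i = ∑ i, q (σ i) from rfl, Equiv.sum_comp σ q, hsum]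
  -- reindex the double sum via σ
  have hdd : ∑ i, ∑ j, |q i - q j| = ∑ i, ∑ j, |qs i - qs j| := by
    rw [hqs]
    rw [← Equiv.sum_comp σ (fun i => ∑ j, |q i - q j|)]
    refine Finset.sum_congr rfl fun i _ => ?_
    exact (Equiv.sum_comp σ (fun j => |q (σ i) - q j|)).symm
  -- inner decomposition using antitonicity
  have habs : ∀ i j : Fin m, |qs i - qs j| =
      (if j ≤ i then qs j - qs i else qs i - qs j) := by
    intro i j
    split
    · next h =>
      rw [abs_sub_comm]
      exact abs_of_nonneg (sub_nonneg.2 (hsort h))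
    · next h =>
      exact abs_of_nonneg (sub_nonneg.2 (hsort (le_of_lt (lt_of_not_ge h))))
  -- evaluate double sum
  have hIic : ∀ j : Fin m, ((Finset.Iic j).card : ℝ) = (j : ℕ) + 1 := by
    intro j; rw [Fin.card_Iic]; push_cast; ring
  have hIci : ∀ j : Fin m, ((Finset.Ici j).card : ℝ) = (m : ℝ) - (j : ℕ) := by
    intro j; rw [Fin.card_Ici]
    rw [Nat.cast_sub (le_of_lt j.2)]
  have hIio : ∀ j : Fin m, ((Finset.Iio j).card : ℝ) = (j : ℕ) := by
    intro j; rw [Fin.card_Iio]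
  have hIoi : ∀ j : Fin m, ((Finset.Ioi j).card : ℝ) = (m : ℝ) - 1 - (j : ℕ) := by
    intro j
    have h : m - 1 - (j : ℕ) = m - ((j : ℕ) + 1) := by omega
    rw [Fin.card_Ioi, h, Nat.cast_sub j.2]
    push_cast; ring
  have key : ∑ i, ∑ j, |qs i - qs j| =
      (2 * (m : ℝ) + 2) - 4 * ∑ i : Fin m, ((i : ℕ) + 1 : ℝ) * qs i := by
    have step1 : ∀ i : Fin m, ∑ j, |qs i - qs j| =
        (∑ j ∈ Finset.Iic i, qs j) - ((i : ℕ) + 1 : ℝ) * qs i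
          + (((m : ℝ) - 1 - (i : ℕ)) * qs i - ∑ j ∈ Finset.Ioi i, qs j) := by
      intro i
      simp_rw [habs i]
      rw [Finset.sum_ite]
      have h1 : Finset.univ.filter (fun j : Fin m => j ≤ i) = Finset.Iic i := by
        ext j; simp
      have h2 : Finset.univ.filter (fun j : Fin m => ¬ j ≤ i) = Finset.Ioi i := by
        ext j; simp [not_le]
      rw [h1, h2, Finset.sum_sub_distrib, Finset.sum_sub_distrib,
        Finset.sum_const, Finset.sum_const, nsmul_eq_mul, nsmul_eq_mul,
        hIic i, hIoi i]
    rw [Finset.sum_congr rfl fun i _ => step1 i]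
    rw [Finset.sum_add_distrib, Finset.sum_sub_distrib, Finset.sum_sub_distrib]
    have hA : ∑ i : Fin m, ∑ j ∈ Finset.Iic i, qs j
        = ∑ j : Fin m, ((m : ℝ) - (j : ℕ)) * qs j := by
      rw [Finset.sum_comm' (s' := fun j : Fin m => Finset.Ici j) (t' := Finset.univ)
        (fun i j => by simp)]
      refine Finset.sum_congr rfl fun j _ => ?_
      rw [Finset.sum_const, nsmul_eq_mul, hIci j]
    have hD : ∑ i : Fin m, ∑ j ∈ Finset.Ioi i, qs j
        = ∑ j : Fin m, ((j : ℕ) : ℝ) * qs j := by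
      rw [Finset.sum_comm' (s' := fun j : Fin m => Finset.Iio j) (t' := Finset.univ)
        (fun i j => by simp)]
      refine Finset.sum_congr rfl fun j _ => ?_
      rw [Finset.sum_const, nsmul_eq_mul, hIio j]
    rw [hA, hD]
    have expand : ∀ c : ℝ, ∑ i : Fin m, c * qs i = c := by
      intro c; rw [← Finset.mul_sum, hsum', mul_one]
    have e1 : (2 * (m : ℝ) + 2) = ∑ i : Fin m, (2 * (m : ℝ) + 2) * qs i :=
      (expand _).symm
    rw [e1, Finset.mul_sum, ← Finset.sum_sub_distrib, ← Finset.sum_sub_distrib,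
      ← Finset.sum_add_distrib, ← Finset.sum_sub_distrib]
    exact Finset.sum_congr rfl fun i _ => by ring
  rw [hdd, key]
  field_simp
end

section
/- Let m ≥ 1 and let q = (q_1, ..., q_m) be a probability distribution together with indices 0 ≤ k* ≤ j* ≤ m such that q_s ≤ 2/m for s = k*+1, ..., j* and q_s ≤ 3/(2m) for s = j*+1, ..., m. Let A_1 = Σ_{s=k*+1}^{j*} q_s, A_2 = Σ_{s=j*+1}^{m} q_s, A = A_1 + A_2, B = Σ_{s=1}^{k*} q_s·log₂(1/q_s), and assume A_2 ≥ A/2. Then H(q) ≥ B + A·log₂ m − (A/2)·log₂ 3, where H denotes Shannon entropy in bits. -/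
/-!
On each block the terms `q log₂ q` are bounded using the pointwise cap on `q`: the middle block
contributes at least `A₁ (log₂ m - 1)` to the entropy and the tail at least
`A₂ (log₂ m + 1 - log₂ 3)`. The loss against `A log₂ m - (A/2) log₂ 3` is then
`(A₂ - A₁)(1 - log₂ 3 / 2)`, which is nonnegative because `A₂ ≥ A₁` and `3 ≤ 4`.
-/

open Real Finset

lemma mul_logb_le_mul_logb_of_le {b x c : ℝ} (hb : 1 < b) (hx : 0 ≤ x) (hxc : x ≤ c) :
    x * logb b x ≤ x * logb b c := by
  rcases hx.eq_or_lt with rfl | hx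
  · simp
  · exact mul_le_mul_of_nonneg_left (logb_le_logb_of_le hb hx hxc) hx.le

lemma sum_mul_logb_le_sum_mul_logb {ι : Type*} {s : Finset ι} {q : ι → ℝ} {b c : ℝ}
    (hb : 1 < b) (hq : ∀ j ∈ s, 0 ≤ q j) (hqc : ∀ j ∈ s, q j ≤ c) :
    ∑ j ∈ s, q j * logb b (q j) ≤ (∑ j ∈ s, q j) * logb b c := by
  rw [sum_mul]
  exact sum_le_sum fun j hj => mul_logb_le_mul_logb_of_le hb (hq j hj) (hqc j hj)

lemma sum_eq_sum_filter_lt_add_sum_filter_Ico_add_sum_filter_ge {ι M : Type*}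
    [AddCommMonoid M] (s : Finset ι) (g : ι → ℕ) (f : ι → M) {k l : ℕ} (hkl : k ≤ l) :
    ∑ j ∈ s, f j = ∑ j ∈ s.filter (fun j => g j < k), f j
      + ∑ j ∈ s.filter (fun j => k ≤ g j ∧ g j < l), f j
      + ∑ j ∈ s.filter (fun j => l ≤ g j), f j := by
  rw [← sum_filter_add_sum_filter_not s (fun j => g j < l),
    ← sum_filter_add_sum_filter_not (s.filter fun j => g j < l) (fun j => g j < k),
    filter_filter, filter_filter]
  refine congrArg₂ (· + ·) (congrArg₂ (· + ·) ?_ ?_) ?_ <;>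
    exact sum_congr (filter_congr fun j _ => by omega) fun _ _ => rfl

lemma logb_two_div (x : ℝ) (hx : x ≠ 0) : logb 2 (2 / x) = 1 - logb 2 x := by
  rw [logb_div two_ne_zero hx, logb_self_eq_one one_lt_two]

lemma logb_three_div_two_mul (x : ℝ) (hx : x ≠ 0) :
    logb 2 (3 / (2 * x)) = logb 2 3 - 1 - logb 2 x := by
  rw [logb_div three_ne_zero (mul_ne_zero two_ne_zero hx), logb_mul two_ne_zero hx,
    logb_self_eq_one one_lt_two]
  ring

lemma logb_two_three_le_two : logb 2 3 ≤ 2 := by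
  calc logb 2 3 ≤ logb 2 (2 ^ 2) := logb_le_logb_of_le one_lt_two (by norm_num) (by norm_num)
    _ = 2 := by rw [logb_pow, logb_self_eq_one one_lt_two]; norm_num

theorem entropy_lower_bound_greedy2_general
    (m : ℕ) (hm : 1 ≤ m) (q : Fin m → ℝ)
    (hqnn : ∀ j, 0 ≤ q j)
    (kstar jstar : ℕ) (hkj : kstar ≤ jstar)
    (hmid : ∀ j : Fin m, kstar ≤ j.val → j.val < jstar → q j ≤ 2 / (m : ℝ))
    (hsmall : ∀ j : Fin m, jstar ≤ j.val → q j ≤ 3 / (2 * (m : ℝ)))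
    (A1 A2 A B : ℝ)
    (hA1 : A1 = ∑ j ∈ Finset.univ.filter
      (fun j : Fin m => kstar ≤ j.val ∧ j.val < jstar), q j)
    (hA2 : A2 = ∑ j ∈ Finset.univ.filter (fun j : Fin m => jstar ≤ j.val), q j)
    (hAsum : A = A1 + A2) (hA2half : A2 ≥ A / 2)
    (hB : B = ∑ j ∈ Finset.univ.filter (fun j : Fin m => j.val < kstar),
      q j * Real.logb 2 (1 / q j)) :
    shannonH q ≥ B + A * Real.logb 2 (m : ℝ) - (A / 2) * Real.logb 2 3 := by
  have hm0 : (m : ℝ) ≠ 0 := Nat.cast_ne_zero.2 (by omega)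
  have hhead : ∑ j ∈ univ.filter (fun j : Fin m => j.val < kstar), q j * logb 2 (q j) = -B := by
    simp only [hB, one_div, logb_inv, mul_neg, sum_neg_distrib, neg_neg]
  have hmiddle := sum_mul_logb_le_sum_mul_logb
    (s := univ.filter fun j : Fin m => kstar ≤ j.val ∧ j.val < jstar) one_lt_two
    (fun j _ => hqnn j) (fun j hj => hmid j (mem_filter.1 hj).2.1 (mem_filter.1 hj).2.2)
  have htail := sum_mul_logb_le_sum_mul_logb
    (s := univ.filter fun j : Fin m => jstar ≤ j.val) one_lt_two
    (fun j _ => hqnn j) (fun j hj => hsmall j (mem_filter.1 hj).2)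
  rw [← hA1, logb_two_div _ hm0] at hmiddle
  rw [← hA2, logb_three_div_two_mul _ hm0] at htail
  have hgap : 0 ≤ (A2 - A1) * (2 - logb 2 3) :=
    mul_nonneg (by linarith) (by linarith [logb_two_three_le_two])
  rw [shannonH, sum_eq_sum_filter_lt_add_sum_filter_Ico_add_sum_filter_ge univ Fin.val _ hkj,
    hhead, hAsum]
  linear_combination hmiddle + htail + hgap / 2

/-- If the components of `q` with (1-based) indices in `(k*, j*]` are at
most `2/m` and those beyond `j*` at most `3/(2m)`, and `A₂ ≥ A/2`, then
`H(q) ≥ B + A log₂ m − (A/2) log₂ 3`. -/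
theorem entropy_lower_bound_greedy2
    (m : ℕ) (hm : 1 ≤ m) (q : Fin m → ℝ)
    (hqnn : ∀ j, 0 ≤ q j) (hqsum : ∑ j, q j = 1)
    (kstar jstar : ℕ) (hkj : kstar ≤ jstar) (hjm : jstar ≤ m)
    (hmid : ∀ j : Fin m, kstar ≤ j.val → j.val < jstar → q j ≤ 2 / (m : ℝ))
    (hsmall : ∀ j : Fin m, jstar ≤ j.val → q j ≤ 3 / (2 * (m : ℝ)))
    (A1 A2 A B : ℝ)
    (hA1 : A1 = ∑ j ∈ Finset.univ.filter
      (fun j : Fin m => kstar ≤ j.val ∧ j.val < jstar), q j)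
    (hA2 : A2 = ∑ j ∈ Finset.univ.filter (fun j : Fin m => jstar ≤ j.val), q j)
    (hAsum : A = A1 + A2) (hA2half : A2 ≥ A / 2)
    (hB : B = ∑ j ∈ Finset.univ.filter (fun j : Fin m => j.val < kstar),
      q j * Real.logb 2 (1 / q j)) :
    shannonH q ≥ B + A * Real.logb 2 (m : ℝ) - (A / 2) * Real.logb 2 3 :=
  entropy_lower_bound_greedy2_general m hm q hqnn kstar jstar hkj hmid hsmall A1 A2 A B hA1 hA2
    hAsum hA2half hB
end
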